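/- arXiv:1101.3629 — 2 statements merged into one kernel-verified Lean document; each statement's English description precedes it below -/
import Mathlib

section
/- If S ⊆ (Fin q ⊕ {*})^n is an A(n,q,w,t) design, then the set U of all words in (Fin (q·q') ⊕ {*})^n obtained by taking each codeword a ∈ S of weight t and each tuple b ∈ (Fin q')^t, placing the pair (a_i, b_j) in the non-star positions of a (in order) and * in the star positions, is an A(n,q·q',w,t) design. -/
/-- Weight of a word over `Option α`: number of non-star (non-`none`) positions. -/
def wt {n : ℕ} {α : Type*} (u : Fin n → Option α) : ℕ :=
  (Finset.univ.filter fun i => ((u i).isSome : Prop)).card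

/-- `SubFace v u` : the face of `v` is contained in the face of `u`, i.e. `v` agrees with `u`
on all non-star positions of `u`. -/
def SubFace {n : ℕ} {α : Type*} (v u : Fin n → Option α) : Prop :=
  ∀ i, ((u i).isSome : Prop) → v i = u i

/-- `H(n,q,w,t)` design over alphabet `α` (with `q = #α`): a set of weight-`w` words such that
every weight-`t` word contains exactly one of them. -/
def IsH (n w t : ℕ) (α : Type*) (S : Set (Fin n → Option α)) : Prop :=
  (∀ s ∈ S, wt s = w) ∧
  ∀ u : Fin n → Option α, wt u = t → ∃! s, s ∈ S ∧ SubFace s u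

/-- `A(n,q,w,t)` design over alphabet `α`: a set of weight-`t` words such that every
weight-`w` word is contained in exactly one of them. -/
def IsA (n w t : ℕ) (α : Type*) (S : Set (Fin n → Option α)) : Prop :=
  (∀ s ∈ S, wt s = t) ∧
  ∀ v : Fin n → Option α, wt v = w → ∃! s, s ∈ S ∧ SubFace v s

/-- Pairing construction: given a word `a` of weight `m` over `Option (Fin q)` and a tuple
`b : Fin m → Fin q'`, place the pair `(a i, b j)` (encoded in `Fin (q*q')`) at the `i`-th
non-star position of `a`, where `j` is the rank of `i` among the non-star positions of `a`. -/
noncomputable def pairWord {n q q' m : ℕ} (a : Fin n → Option (Fin q))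
    (b : Fin m → Fin q') (h : wt a = m) : Fin n → Option (Fin (q * q')) :=
  fun i =>
    if hi : ((a i).isSome : Prop) then
      some (finProdFinEquiv ((a i).get hi,
        b (((Finset.univ.filter fun j => ((a j).isSome : Prop)).orderIsoOfFin h).symm
          ⟨i, Finset.mem_filter.mpr ⟨Finset.mem_univ i, hi⟩⟩)))
    else none

/-!
Identify `Fin (q * q')` with `Fin q × Fin q'` and let `fstWord` keep the first coordinate. A word `v`
lies in the face `pairWord a b` exactly when `fstWord v` lies in the face `a` and `b` lists the
second coordinates of `v` along the support of `a`. So for a weight-`w` word `v`, the design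
property of `S` applied to `fstWord v` determines `a`, and `v` itself then determines `b`.
-/

section

variable {n q q' m : ℕ} {α β : Type*}

lemma wt_congr {u : Fin n → Option α} {u' : Fin n → Option β}
    (h : ∀ i, (u i).isSome = (u' i).isSome) : wt u = wt u' := by
  unfold wt
  simp only [h]

lemma wt_map (f : α → β) (u : Fin n → Option α) : wt (fun i => (u i).map f) = wt u :=
  wt_congr fun _ => Option.isSome_map

lemma SubFace.map {v u : Fin n → Option α} (h : SubFace v u) (f : α → β) :
    SubFace (fun i => (v i).map f) (fun i => (u i).map f) :=
  fun i hi => congrArg (Option.map f) (h i (by simpa using hi))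

lemma SubFace.eq_of_isSome_eq {v u u' : Fin n → Option α} (hu : SubFace v u)
    (hu' : SubFace v u') (h : ∀ i, (u i).isSome = (u' i).isSome) : u = u' := by
  funext i
  by_cases hi : (u i).isSome
  · rw [← hu i hi, hu' i (h i ▸ hi)]
  · have hi' : ¬(u' i).isSome := by rwa [← h i]
    rw [Option.not_isSome_iff_eq_none.mp hi, Option.not_isSome_iff_eq_none.mp hi']

lemma isSome_pairWord (a : Fin n → Option (Fin q)) (b : Fin m → Fin q') (h : wt a = m)
    (i : Fin n) : (pairWord a b h i).isSome = (a i).isSome := by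
  unfold pairWord
  split <;> simp_all

lemma wt_pairWord (a : Fin n → Option (Fin q)) (b : Fin m → Fin q') (h : wt a = m) :
    wt (pairWord a b h) = m :=
  (wt_congr (isSome_pairWord a b h)).trans h

def fstWord (v : Fin n → Option (Fin (q * q'))) : Fin n → Option (Fin q) :=
  fun i => (v i).map fun x => (finProdFinEquiv.symm x).1

lemma wt_fstWord (v : Fin n → Option (Fin (q * q'))) : wt (fstWord v) = wt v :=
  wt_map _ v

lemma fstWord_pairWord (a : Fin n → Option (Fin q)) (b : Fin m → Fin q') (h : wt a = m) :
    fstWord (pairWord a b h) = a := by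
  funext i
  by_cases hi : (a i).isSome
  · simp only [fstWord, pairWord, hi, dite_true, Option.map_some, Equiv.symm_apply_apply,
      Option.some_get]
  · simp [fstWord, pairWord, Option.not_isSome_iff_eq_none.mp hi]

lemma SubFace.fstWord_of_pairWord {v : Fin n → Option (Fin (q * q'))}
    {a : Fin n → Option (Fin q)} {b : Fin m → Fin q'} {h : wt a = m}
    (hv : SubFace v (pairWord a b h)) : SubFace (fstWord v) a :=
  fstWord_pairWord a b h ▸ hv.map _

lemma exists_eq_some_finProdFinEquiv {x : Option (Fin (q * q'))} {c : Fin q}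
    (hx : x.map (fun z => (finProdFinEquiv.symm z).1) = some c) :
    ∃ y, x = some (finProdFinEquiv (c, y)) := by
  obtain ⟨z, rfl, hz⟩ := Option.map_eq_some_iff.mp hx
  refine ⟨(finProdFinEquiv.symm z).2, ?_⟩
  rw [← hz, Prod.mk.eta, Equiv.apply_symm_apply]

lemma exists_subFace_pairWord {v : Fin n → Option (Fin (q * q'))}
    {a : Fin n → Option (Fin q)} (hva : SubFace (fstWord v) a) (h : wt a = m) :
    ∃ b : Fin m → Fin q', SubFace v (pairWord a b h) := by
  set F := Finset.univ.filter fun j => ((a j).isSome : Prop)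
  have hsecond : ∀ k : F, ∃ y, v k = some (finProdFinEquiv
      ((a k).get (Finset.mem_filter.mp k.2).2, y)) := fun k =>
    exists_eq_some_finProdFinEquiv <|
      (hva k (Finset.mem_filter.mp k.2).2).trans (Option.some_get _).symm
  choose y hy using hsecond
  refine ⟨fun j => y (F.orderIsoOfFin h j), fun i hi => ?_⟩
  have hai : (a i).isSome := by rwa [isSome_pairWord] at hi
  simp only [pairWord, hai, dite_true, F, OrderIso.apply_symm_apply]
  exact hy ⟨i, Finset.mem_filter.mpr ⟨Finset.mem_univ i, hai⟩⟩

end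

theorem construction_II_general (n q q' w t : ℕ)
    (S : Set (Fin n → Option (Fin q))) (hS : IsA n w t (Fin q) S) :
    IsA n w t (Fin (q * q'))
      {c | ∃ a ∈ S, ∃ b : Fin t → Fin q', ∃ h : wt a = t, c = pairWord a b h} := by
  refine ⟨?_, fun v hv => ?_⟩
  · rintro _ ⟨a, -, b, h, rfl⟩
    exact wt_pairWord a b h
  obtain ⟨a, ⟨haS, hva⟩, ha_unique⟩ := hS.2 (fstWord v) (by rw [wt_fstWord, hv])
  have h := hS.1 a haS
  obtain ⟨b, hb⟩ := exists_subFace_pairWord hva h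
  refine ⟨pairWord a b h, ⟨⟨a, haS, b, h, rfl⟩, hb⟩, ?_⟩
  rintro _ ⟨⟨a', ha'S, b', h', rfl⟩, hb'⟩
  obtain rfl := ha_unique a' ⟨ha'S, hb'.fstWord_of_pairWord⟩
  exact hb'.eq_of_isSome_eq hb fun i => by rw [isSome_pairWord, isSome_pairWord]

theorem construction_II (n q q' w t : ℕ) (hwn : w ≤ n) (htw : t ≤ w) (ht : 1 ≤ t)
    (hq : 1 ≤ q) (hq' : 1 ≤ q')
    (S : Set (Fin n → Option (Fin q))) (hS : IsA n w t (Fin q) S) :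
    IsA n w t (Fin (q * q'))
      {c | ∃ a ∈ S, ∃ b : Fin t → Fin q', ∃ h : wt a = t, c = pairWord a b h} :=
  construction_II_general n q q' w t S hS
end

section
/- If S is a precise clique matching in (Fin q)^n (a set of lines that is both an H(n,q,n−1,n−2) design and an A(n,q,n,n−1) design), then counting via the H-property gives |S| = C(n,n−2)·q^{n−2}/C(n−1,n−2) = (n/2)·q^{n−2}, and counting via the A-property gives |S| = q^{n−1}; hence a precise clique matching can exist only if n = 2q. -/
open Finset

open scoped Classical

/-- support of a word -/
def supp {n : ℕ} {α : Type*} (u : Fin n → Option α) : Finset (Fin n) :=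
  Finset.univ.filter fun i => ((u i).isSome : Prop)

lemma wt_eq_supp_card {n : ℕ} {α : Type*} (u : Fin n → Option α) : wt u = (supp u).card := rfl

lemma mem_supp {n : ℕ} {α : Type*} {u : Fin n → Option α} {i : Fin n} :
    i ∈ supp u ↔ (u i).isSome := by simp [supp]

/-- A general double counting lemma. -/
lemma double_count {β γ : Type*} (A : Finset β) (B : Finset γ) (P : β → γ → Prop) :
    ∑ a ∈ A, (B.filter (fun b => P a b)).card = ∑ b ∈ B, (A.filter (fun a => P a b)).card := by
  simp only [Finset.card_filter]
  exact Finset.sum_comm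

/-- If a finset has exactly one element satisfying a predicate, the filter has card 1. -/
lemma filter_card_one {β : Type*} {B : Finset β} {p : β → Prop}
    (h : ∃! b, b ∈ B ∧ p b) : (B.filter p).card = 1 := by
  obtain ⟨b, ⟨hbB, hbp⟩, huniq⟩ := h
  rw [Finset.card_eq_one]
  refine ⟨b, ?_⟩
  ext x
  simp only [Finset.mem_filter, Finset.mem_singleton]
  constructor
  · rintro ⟨h1, h2⟩; exact huniq x ⟨h1, h2⟩
  · rintro rfl; exact ⟨hbB, hbp⟩

/-- Words with a given support. -/
lemma fiber_card {n q : ℕ} (t : Finset (Fin n)) :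
    ((Finset.univ : Finset (Fin n → Option (Fin q))).filter (fun u => supp u = t)).card
      = q ^ t.card := by
  rw [← Fintype.card_subtype]
  have e : {u : Fin n → Option (Fin q) // supp u = t} ≃ ({i // i ∈ t} → Fin q) :=
    { toFun := fun u i => (u.1 i.1).get (by
        have h2 : (i : Fin n) ∈ supp u.1 := by rw [u.2]; exact i.2
        exact mem_supp.mp h2)
      invFun := fun f => ⟨fun i => if h : i ∈ t then some (f ⟨i, h⟩) else none, by
        ext i
        simp only [mem_supp]
        by_cases h : i ∈ t <;> simp [h]⟩
      left_inv := fun u => by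
        apply Subtype.ext
        funext i
        by_cases h : i ∈ t
        · simp [h]
        · simp only [dif_neg h]
          have : ¬ (u.1 i).isSome := fun hs => h (u.2 ▸ mem_supp.mpr hs)
          exact (Option.not_isSome_iff_eq_none.mp this).symm
      right_inv := fun f => by
        funext i
        simp [i.2] }
  rw [Fintype.card_congr e, Fintype.card_fun, Fintype.card_coe, Fintype.card_fin]

/-- Number of words of weight `w`. -/
lemma weight_count {n q : ℕ} (w : ℕ) :
    ((Finset.univ : Finset (Fin n → Option (Fin q))).filter (fun u => wt u = w)).card
      = n.choose w * q ^ w := by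
  rw [Finset.card_eq_sum_card_fiberwise (f := fun u => supp u)
      (t := Finset.univ.powersetCard w)
      (fun u hu => by
        rw [Finset.mem_coe, Finset.mem_powersetCard]
        exact ⟨Finset.subset_univ _, by
          have := (Finset.mem_filter.mp (Finset.mem_coe.mp hu)).2
          rw [wt_eq_supp_card] at this
          exact this⟩)]
  have key : ∀ t ∈ Finset.univ.powersetCard w,
      ((Finset.univ.filter (fun u : Fin n → Option (Fin q) => wt u = w)).filter
        (fun u => supp u = t)).card = q ^ w := by
    intro t ht
    have htc : t.card = w := (Finset.mem_powersetCard.mp ht).2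
    rw [Finset.filter_filter]
    have : (Finset.univ.filter fun u : Fin n → Option (Fin q) => wt u = w ∧ supp u = t)
        = Finset.univ.filter (fun u => supp u = t) := by
      apply Finset.filter_congr
      intro u _
      constructor
      · rintro ⟨_, h⟩; exact h
      · rintro h; exact ⟨by rw [wt_eq_supp_card, h, htc], h⟩
    rw [this, fiber_card, htc]
  rw [Finset.sum_congr rfl key, Finset.sum_const, Finset.card_powersetCard,
    Finset.card_univ, Fintype.card_fin, smul_eq_mul]

lemma full_isSome {n q : ℕ} {v : Fin n → Option (Fin q)} (hv : wt v = n) (i : Fin n) :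
    (v i).isSome := by
  have : supp v = Finset.univ := by
    apply Finset.eq_univ_of_card
    rw [← wt_eq_supp_card, hv, Fintype.card_fin]
  exact mem_supp.mp (this ▸ Finset.mem_univ i)

lemma star_unique {n q : ℕ} {s : Fin n → Option (Fin q)} (hn : 1 ≤ n) (hs : wt s = n - 1) :
    ∃ j, s j = none ∧ ∀ i, i ≠ j → (s i).isSome := by
  have hadd := Finset.card_filter_add_card_filter_not
    (s := (Finset.univ : Finset (Fin n))) (fun i => ((s i).isSome : Prop))
  rw [Finset.card_univ, Fintype.card_fin] at hadd
  have h1 : (Finset.univ.filter fun i => ¬ ((s i).isSome : Prop)).card = 1 := by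
    have : (Finset.univ.filter fun i => ((s i).isSome : Prop)).card = n - 1 := hs
    omega
  obtain ⟨j, hj⟩ := Finset.card_eq_one.mp h1
  refine ⟨j, ?_, ?_⟩
  · have : j ∈ Finset.univ.filter fun i => ¬ ((s i).isSome : Prop) := by
      rw [hj]; exact Finset.mem_singleton_self j
    have := (Finset.mem_filter.mp this).2
    exact Option.not_isSome_iff_eq_none.mp this
  · intro i hi
    by_contra hcon
    have : i ∈ Finset.univ.filter fun i => ¬ ((s i).isSome : Prop) :=
      Finset.mem_filter.mpr ⟨Finset.mem_univ i, hcon⟩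
    rw [hj, Finset.mem_singleton] at this
    exact hi this

/-- Each line contains exactly `q` full points. -/
lemma ext_count {n q : ℕ} (hn : 1 ≤ n) {s : Fin n → Option (Fin q)} (hs : wt s = n - 1) :
    ((Finset.univ.filter (fun v : Fin n → Option (Fin q) => wt v = n)).filter
      (fun v => SubFace v s)).card = q := by
  obtain ⟨j, hj, hother⟩ := star_unique hn hs
  have himg : (Finset.univ.filter (fun v : Fin n → Option (Fin q) => wt v = n)).filter
      (fun v => SubFace v s)
      = Finset.univ.image (fun a : Fin q => Function.update s j (some a)) := by
    ext v
    simp only [Finset.mem_filter, Finset.mem_image, Finset.mem_univ, true_and]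
    constructor
    · rintro ⟨hw, hsf⟩
      refine ⟨(v j).get (full_isSome hw j), ?_⟩
      funext i
      by_cases h : i = j
      · subst h; simp
      · rw [Function.update_of_ne h]
        exact (hsf i (hother i h)).symm
    · rintro ⟨a, rfl⟩
      constructor
      · rw [wt_eq_supp_card]
        have : supp (Function.update s j (some a)) = Finset.univ := by
          apply Finset.eq_univ_of_forall
          intro i
          rw [mem_supp]
          by_cases h : i = j
          · subst h; simp
          · rw [Function.update_of_ne h]; exact hother i h
        rw [this, Finset.card_univ, Fintype.card_fin]
      · intro i hi
        have h : i ≠ j := by rintro rfl; rw [hj] at hi; simp at hi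
        rw [Function.update_of_ne h]
  rw [himg, Finset.card_image_of_injective _ (fun a b hab => by
    have := congrFun hab j
    simpa using this), Finset.card_univ, Fintype.card_fin]


/-- Each line is contained in exactly `n - 1` faces of weight `n - 2`. -/
lemma del_count {n q : ℕ} (hn : 2 ≤ n) {s : Fin n → Option (Fin q)} (hs : wt s = n - 1) :
    ((Finset.univ.filter (fun u : Fin n → Option (Fin q) => wt u = n - 2)).filter
      (fun u => SubFace s u)).card = n - 1 := by
  obtain ⟨j, hj, hother⟩ := star_unique (by omega) hs
  have himg : (Finset.univ.filter (fun u : Fin n → Option (Fin q) => wt u = n - 2)).filter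
      (fun u => SubFace s u)
      = (supp s).image (fun k => Function.update s k none) := by
    ext u
    simp only [Finset.mem_filter, Finset.mem_image, Finset.mem_univ, true_and]
    constructor
    · rintro ⟨hw, hsf⟩
      -- u j = none
      have huj : u j = none := by
        by_contra h
        have hus : (u j).isSome := Option.ne_none_iff_isSome.mp h
        have := hsf j hus
        rw [hj] at this
        rw [← this] at hus
        simp at hus
      -- the non-support of u has two elements, one of them j
      have hadd := Finset.card_filter_add_card_filter_not
        (s := (Finset.univ : Finset (Fin n))) (fun i => ((u i).isSome : Prop))
      rw [Finset.card_univ, Fintype.card_fin] at hadd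
      have h2 : (Finset.univ.filter fun i => ¬ ((u i).isSome : Prop)).card = 2 := by
        have : (Finset.univ.filter fun i => ((u i).isSome : Prop)).card = n - 2 := hw
        omega
      set N := Finset.univ.filter fun i => ¬ ((u i).isSome : Prop) with hN
      have hjN : j ∈ N := Finset.mem_filter.mpr ⟨Finset.mem_univ j, by rw [huj]; simp⟩
      have herase : (N.erase j).card = 1 := by
        rw [Finset.card_erase_of_mem hjN, h2]
      obtain ⟨k, hk⟩ := Finset.card_eq_one.mp herase
      have hkN : k ∈ N := Finset.mem_of_mem_erase (hk ▸ Finset.mem_singleton_self k)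
      have hkj : k ≠ j := Finset.ne_of_mem_erase (hk ▸ Finset.mem_singleton_self k)
      have hNeq : N = {j, k} := by
        apply (Finset.eq_of_subset_of_card_le ?_ ?_).symm
        · intro x hx
          rcases Finset.mem_insert.mp hx with rfl | hx
          · exact hjN
          · rw [Finset.mem_singleton] at hx; subst hx; exact hkN
        · rw [h2, Finset.card_insert_of_notMem (by simp [hkj.symm]), Finset.card_singleton]
      have huk : u k = none := Option.not_isSome_iff_eq_none.mp (Finset.mem_filter.mp hkN).2
      refine ⟨k, mem_supp.mpr (hother k hkj), ?_⟩
      funext i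
      by_cases hik : i = k
      · subst hik; rw [Function.update_self, huk]
      · rw [Function.update_of_ne hik]
        by_cases hij : i = j
        · subst hij; rw [hj, huj]
        · have hiN : i ∉ N := by
            rw [hNeq]; simp [hij, hik]
          have : (u i).isSome := by
            by_contra h
            exact hiN (Finset.mem_filter.mpr ⟨Finset.mem_univ i, h⟩)
          exact hsf i this
    · rintro ⟨k, hk, rfl⟩
      have hks : (s k).isSome := mem_supp.mp hk
      have hkj : k ≠ j := by rintro rfl; rw [hj] at hks; simp at hks
      constructor
      · rw [wt_eq_supp_card]
        have : supp (Function.update s k none) = (supp s).erase k := by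
          ext i
          rw [mem_supp, Finset.mem_erase, mem_supp]
          by_cases h : i = k
          · subst h; simp
          · rw [Function.update_of_ne h]; simp [h]
        rw [this, Finset.card_erase_of_mem hk, ← wt_eq_supp_card, hs]
        omega
      · intro i hi
        have h : i ≠ k := by rintro rfl; rw [Function.update_self] at hi; simp at hi
        rw [Function.update_of_ne h] at hi ⊢
  rw [himg, Finset.card_image_of_injOn (fun a ha b hb hab => by
      by_contra hne
      have h1 := congrFun hab a
      rw [Function.update_self, Function.update_of_ne hne] at h1
      have : (s a).isSome := mem_supp.mp (by simpa using ha)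
      rw [← h1] at this
      simp at this),
    ← wt_eq_supp_card, hs]

theorem precise_clique_matching_counts (n q : ℕ) (hn : 2 ≤ n) (hq : 2 ≤ q)
    (S : Set (Fin n → Option (Fin q)))
    (hH : IsH n (n - 1) (n - 2) (Fin q) S) (hA : IsA n n (n - 1) (Fin q) S) :
    S.ncard = q ^ (n - 1) ∧ 2 * S.ncard = n * q ^ (n - 2) ∧ n = 2 * q := by
  have hfin : S.Finite := Set.toFinite S
  have hcard : S.ncard = hfin.toFinset.card := Set.ncard_eq_toFinset_card S hfin
  set S' : Finset (Fin n → Option (Fin q)) := hfin.toFinset with hS'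
  have hmem : ∀ s, s ∈ S' ↔ s ∈ S := fun s => hfin.mem_toFinset
  set Wn : Finset (Fin n → Option (Fin q)) := Finset.univ.filter (fun u => wt u = n) with hWn
  set Wm : Finset (Fin n → Option (Fin q)) := Finset.univ.filter (fun u => wt u = n - 2)
    with hWm
  -- First double count : pairs (full point, line)
  have e1 : q ^ n = S'.card * q := by
    have hdc := double_count Wn S' (fun v s => SubFace v s)
    have hL : ∑ v ∈ Wn, (S'.filter (fun s => SubFace v s)).card = q ^ n := by
      rw [Finset.sum_congr rfl (fun v hv => filter_card_one (by
        obtain ⟨s, hs, hu⟩ := hA.2 v ((Finset.mem_filter.mp hv).2)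
        exact ⟨s, ⟨(hmem s).mpr hs.1, hs.2⟩, fun y hy => hu y ⟨(hmem y).mp hy.1, hy.2⟩⟩))]
      rw [Finset.sum_const, smul_eq_mul, mul_one, hWn, weight_count, Nat.choose_self, one_mul]
    have hR : ∑ s ∈ S', (Wn.filter (fun v => SubFace v s)).card = S'.card * q := by
      rw [Finset.sum_congr rfl (fun s hs => ext_count (by omega) (hA.1 s ((hmem s).mp hs)))]
      rw [Finset.sum_const, smul_eq_mul]
    rw [← hL, hdc, hR]
  -- Second double count : pairs (2-face, line)
  have e2 : n.choose (n - 2) * q ^ (n - 2) = S'.card * (n - 1) := by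
    have hdc := double_count Wm S' (fun u s => SubFace s u)
    have hL : ∑ u ∈ Wm, (S'.filter (fun s => SubFace s u)).card
        = n.choose (n - 2) * q ^ (n - 2) := by
      rw [Finset.sum_congr rfl (fun u hu => filter_card_one (by
        obtain ⟨s, hs, huq⟩ := hH.2 u ((Finset.mem_filter.mp hu).2)
        exact ⟨s, ⟨(hmem s).mpr hs.1, hs.2⟩, fun y hy => huq y ⟨(hmem y).mp hy.1, hy.2⟩⟩))]
      rw [Finset.sum_const, smul_eq_mul, mul_one, hWm, weight_count]
    have hR : ∑ s ∈ S', (Wm.filter (fun u => SubFace s u)).card = S'.card * (n - 1) := by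
      rw [Finset.sum_congr rfl (fun s hs => del_count hn (hA.1 s ((hmem s).mp hs)))]
      rw [Finset.sum_const, smul_eq_mul]
    rw [← hL, hdc, hR]
  -- arithmetic
  have hq0 : 0 < q := by omega
  have hpow : q ^ n = q ^ (n - 1) * q := by
    rw [← pow_succ]; congr 1; omega
  have hcard1 : S'.card = q ^ (n - 1) := by
    have := e1
    rw [hpow] at this
    exact (Nat.eq_of_mul_eq_mul_right hq0 this.symm)
  -- 2 * choose n 2 = n * (n-1)
  have hch : n.choose (n - 2) = n.choose 2 := by
    exact Nat.choose_symm hn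
  have hdvd : 2 ∣ n * (n - 1) := by
    rcases Nat.even_or_odd n with he | ho
    · exact Dvd.dvd.mul_right he.two_dvd _
    · have : Even (n - 1) := Nat.Odd.sub_odd ho odd_one
      exact Dvd.dvd.mul_left this.two_dvd _
  have hch2 : 2 * n.choose 2 = n * (n - 1) := by
    have h := Nat.choose_two_right n
    omega
  have hcard2 : 2 * S'.card = n * q ^ (n - 2) := by
    have h2 : 2 * (n.choose (n - 2) * q ^ (n - 2)) = 2 * (S'.card * (n - 1)) := by rw [e2]
    rw [hch] at h2
    have h3 : (n * q ^ (n - 2)) * (n - 1) = (2 * S'.card) * (n - 1) := by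
      calc (n * q ^ (n - 2)) * (n - 1) = (n * (n - 1)) * q ^ (n - 2) := by ring
        _ = (2 * n.choose 2) * q ^ (n - 2) := by rw [hch2]
        _ = 2 * (n.choose 2 * q ^ (n - 2)) := by ring
        _ = 2 * (S'.card * (n - 1)) := h2
        _ = (2 * S'.card) * (n - 1) := by ring
    exact (Nat.eq_of_mul_eq_mul_right (by omega) h3).symm
  have hn2q : n = 2 * q := by
    have hpow2 : q ^ (n - 1) = q ^ (n - 2) * q := by
      rw [← pow_succ]; congr 1; omega
    have h4 : (2 * q) * q ^ (n - 2) = n * q ^ (n - 2) := by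
      calc (2 * q) * q ^ (n - 2) = 2 * (q ^ (n - 2) * q) := by ring
        _ = 2 * q ^ (n - 1) := by rw [hpow2]
        _ = 2 * S'.card := by rw [hcard1]
        _ = n * q ^ (n - 2) := hcard2
    have := Nat.eq_of_mul_eq_mul_right (Nat.pow_pos hq0) h4
    omega
  exact ⟨by rw [hcard, hcard1], by rw [hcard, hcard2], hn2q⟩
end
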